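/- Let X, Y be locally convex Hausdorff topological vector spaces, φ : X × Y → ℝ̄ a proper polyhedral convex function, and F : X ⇒ Y a polyhedral convex multifunction. Then the optimal value function μ(x) = inf{φ(x,y) : y ∈ F(x)} is a polyhedral convex function, i.e., epi μ is a polyhedral convex set in X × ℝ. -/

import Mathlib

/-- A set is polyhedral convex if it is a finite intersection of half-spaces
given by continuous linear functionals. -/
def IsPolyhedralConvex {E : Type*} [AddCommGroup E] [Module ℝ E] [TopologicalSpace E]
    (D : Set E) : Prop :=
  ∃ (n : ℕ) (f : Fin n → E →L[ℝ] ℝ) (α : Fin n → ℝ),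
    D = {x | ∀ i, f i x ≤ α i}

/-!
Fourier–Motzkin elimination: projecting a polyhedral set along one real coordinate gives a
polyhedral set, hence also along finitely many. A polyhedral set in `E × F` only sees `F` through
the finitely many functionals `y ↦ fᵢ (0, y)`, whose joint range is finite dimensional, so the
projection along an arbitrary factor `F` reduces to finitely many real coordinates.
The epigraph of `μ` is then the projection of `epi φ ∩ (G × ℝ)` along `Y`, up to the limit
`μ x ≤ t ⇐ ∀ ε > 0, μ x < t + ε`, which survives because polyhedral sets are closed.
-/

open Set Filter Topology

theorem Set.Finite.exists_between_le {α : Type*} [LinearOrder α] [Nonempty α] {s t : Set α}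
    (hs : s.Finite) (ht : t.Finite) (H : ∀ x ∈ s, ∀ y ∈ t, x ≤ y) :
    ∃ b, (∀ x ∈ s, x ≤ b) ∧ ∀ y ∈ t, b ≤ y := by
  rcases s.eq_empty_or_nonempty with rfl | hne
  · obtain ⟨b, hb⟩ := ht.bddBelow
    exact ⟨b, by simp, hb⟩
  · obtain ⟨m, hm, hmax⟩ := s.exists_max_image id hs hne
    exact ⟨m, hmax, H m hm⟩

theorem Real.exists_forall_mul_le_iff {ι : Type*} [Finite ι] (d c : ι → ℝ) :
    (∃ t, ∀ i, d i * t ≤ c i) ↔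
      (∀ i, d i = 0 → 0 ≤ c i) ∧ ∀ i j, 0 < d i → d j < 0 → d j * c i ≤ d i * c j := by
  constructor
  · rintro ⟨t, ht⟩
    refine ⟨fun i hi => by simpa [hi] using ht i, fun i j hi hj => ?_⟩
    nlinarith [ht i, ht j]
  · rintro ⟨hzero, hpair⟩
    -- constraints with `d j < 0` bound `t` below by `c j / d j`, those with `d i > 0` above
    obtain ⟨t, hlow, hup⟩ := Set.Finite.exists_between_le
      (s := (fun j => c j / d j) '' {j | d j < 0}) (t := (fun i => c i / d i) '' {i | 0 < d i})
      (toFinite _) (toFinite _) (by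
        rintro _ ⟨j, hj, rfl⟩ _ ⟨i, hi, rfl⟩
        rw [div_le_iff_of_neg hj, div_mul_eq_mul_div, div_le_iff₀ hi]
        linarith [hpair i j hi hj])
    refine ⟨t, fun i => ?_⟩
    rcases lt_trichotomy (d i) 0 with hi | hi | hi
    · have hti := hlow _ ⟨i, hi, rfl⟩
      rw [div_le_iff_of_neg hi] at hti
      linarith
    · simpa [hi] using hzero i hi
    · have hti := hup _ ⟨i, hi, rfl⟩
      rw [le_div_iff₀ hi] at hti
      linarith

theorem LinearMap.exists_range_comp_eq_range {R M N : Type*} [Semiring R] [AddCommMonoid M]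
    [Module R M] [AddCommMonoid N] [Module R N] [IsNoetherian R N] (B : M →ₗ[R] N) :
    ∃ (k : ℕ) (Λ : (Fin k → R) →ₗ[R] M), range (B ∘ₗ Λ) = range B := by
  obtain ⟨k, v, hv⟩ :=
    Submodule.fg_iff_exists_fin_generating_family.mp (IsNoetherian.noetherian (range B))
  choose y hy using fun j => (hv ▸ Submodule.subset_span ⟨j, rfl⟩ : v j ∈ range B)
  refine ⟨k, Fintype.linearCombination R y, ?_⟩
  rw [range_comp, Fintype.range_linearCombination, Submodule.map_span, ← Set.range_comp,
    ← hv, show ⇑B ∘ y = v from funext hy]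

theorem sInf_le_coe_iff_of_isClosed {X : Type*} [TopologicalSpace X] {S : X → Set EReal}
    (hS : IsClosed {q : X × ℝ | ∃ e ∈ S q.1, e ≤ q.2}) (x : X) (t : ℝ) :
    sInf (S x) ≤ t ↔ ∃ e ∈ S x, e ≤ t := by
  refine ⟨fun h => ?_, fun ⟨e, he, het⟩ => (sInf_le he).trans het⟩
  have hlim : Tendsto (fun ε : ℝ => (x, t + ε)) (𝓝[>] 0) (𝓝 (x, t)) :=
    ((continuous_const.prodMk (continuous_const.add continuous_id)).tendsto' 0 (x, t)
      (by simp)).mono_left nhdsWithin_le_nhds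
  refine hS.mem_of_tendsto hlim (eventually_nhdsWithin_of_forall fun ε hε => ?_)
  obtain ⟨e, he, hlt⟩ := sInf_lt_iff.mp
    (h.trans_lt (EReal.coe_lt_coe_iff.mpr (lt_add_of_pos_right t hε)))
  exact ⟨e, he, hlt.le⟩

namespace IsPolyhedralConvex

variable {E F : Type*} [AddCommGroup E] [Module ℝ E] [TopologicalSpace E]
  [AddCommGroup F] [Module ℝ F] [TopologicalSpace F]

theorem of_finite {ι : Type*} [Finite ι] (f : ι → E →L[ℝ] ℝ) (α : ι → ℝ) :
    IsPolyhedralConvex {x : E | ∀ i, f i x ≤ α i} := by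
  obtain ⟨n, ⟨e⟩⟩ := Finite.exists_equiv_fin ι
  refine ⟨n, f ∘ e.symm, α ∘ e.symm, ?_⟩
  ext x
  exact e.symm.forall_congr_right.symm

theorem preimage {D : Set F} (hD : IsPolyhedralConvex D) (T : E →L[ℝ] F) :
    IsPolyhedralConvex (T ⁻¹' D) := by
  obtain ⟨n, f, α, rfl⟩ := hD
  exact ⟨n, fun i => (f i).comp T, α, rfl⟩

theorem inter {C D : Set E} (hC : IsPolyhedralConvex C) (hD : IsPolyhedralConvex D) :
    IsPolyhedralConvex (C ∩ D) := by
  obtain ⟨n, f, α, rfl⟩ := hC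
  obtain ⟨m, g, β, rfl⟩ := hD
  convert of_finite (Sum.elim f g) (Sum.elim α β) using 1
  ext x
  simp [Sum.forall]

theorem isClosed {D : Set E} (hD : IsPolyhedralConvex D) : IsClosed D := by
  obtain ⟨n, f, α, rfl⟩ := hD
  simp only [ofPred_forall]
  exact isClosed_iInter fun i => isClosed_le (f i).continuous continuous_const

theorem image_fst_real {D : Set (E × ℝ)} (hD : IsPolyhedralConvex D) :
    IsPolyhedralConvex (Prod.fst '' D) := by
  obtain ⟨n, f, α, rfl⟩ := hD
  set g : Fin n → E →L[ℝ] ℝ := fun i => (f i).comp (.inl ℝ E ℝ)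
  set d : Fin n → ℝ := fun i => f i (0, 1)
  have hf : ∀ i x t, f i (x, t) = g i x + d i * t := fun i x t => by
    rw [show (x, t) = (x, 0) + t • ((0 : E), (1 : ℝ)) by simp, map_add, map_smul, smul_eq_mul,
      mul_comm]
    rfl
  have hproj : Prod.fst '' {p : E × ℝ | ∀ i, f i p ≤ α i} =
      {x | ∀ i : {i // d i = 0}, g i x ≤ α i} ∩
      {x | ∀ p : {p : Fin n × Fin n // 0 < d p.1 ∧ d p.2 < 0},
        (d p.1.1 • g p.1.2 - d p.1.2 • g p.1.1) x ≤ d p.1.1 * α p.1.2 - d p.1.2 * α p.1.1} := by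
    ext x
    have hexists : x ∈ Prod.fst '' {p : E × ℝ | ∀ i, f i p ≤ α i} ↔
        ∃ t, ∀ i, d i * t ≤ α i - g i x := by
      simp [hf, le_sub_iff_add_le']
    rw [hexists, Real.exists_forall_mul_le_iff]
    simp only [mem_inter_iff, mem_ofPred_eq, Subtype.forall, Prod.forall, sub_nonneg,
      sub_apply, smul_apply, smul_eq_mul]
    refine and_congr Iff.rfl (forall₂_congr fun i j => ?_)
    exact ⟨fun h hij => by linarith [h hij.1 hij.2], fun h hi hj => by linarith [h ⟨hi, hj⟩]⟩
  rw [hproj]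
  exact (of_finite _ _).inter (of_finite _ _)

theorem image_fst_pi {k : ℕ} {D : Set (E × (Fin k → ℝ))} (hD : IsPolyhedralConvex D) :
    IsPolyhedralConvex (Prod.fst '' D) := by
  induction k with
  | zero =>
    convert hD.preimage (.inl ℝ E (Fin 0 → ℝ)) using 1
    ext x
    refine ⟨?_, fun hx => ⟨(x, 0), hx, rfl⟩⟩
    rintro ⟨⟨x, s⟩, hs, rfl⟩
    simpa [Subsingleton.elim s 0] using hs
  | succ k ih =>
    let T : ((E × (Fin k → ℝ)) × ℝ) →L[ℝ] E × (Fin (k + 1) → ℝ) :=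
      (ContinuousLinearMap.fst ℝ E _ ∘L .fst ℝ _ ℝ).prod
        (.finCons (.snd ℝ _ ℝ) (.snd ℝ E _ ∘L .fst ℝ _ ℝ))
    have hT : ∀ x s t, T ((x, s), t) = (x, Fin.cons t s) := fun _ _ _ => rfl
    convert ih (image_fst_real (hD.preimage T)) using 1
    ext x
    constructor
    · rintro ⟨⟨x, s⟩, hs, rfl⟩
      exact ⟨(x, Fin.tail s), ⟨((x, Fin.tail s), s 0), by
        rwa [mem_preimage, hT, Fin.cons_self_tail], rfl⟩, rfl⟩
    · rintro ⟨_, ⟨⟨⟨x, s⟩, t⟩, hst, rfl⟩, rfl⟩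
      exact ⟨_, hst, rfl⟩

theorem image_fst {D : Set (E × F)} (hD : IsPolyhedralConvex D) :
    IsPolyhedralConvex (Prod.fst '' D) := by
  obtain ⟨n, f, α, rfl⟩ := hD
  let B : F →ₗ[ℝ] Fin n → ℝ := LinearMap.pi fun i => ((f i).comp (.inr ℝ E F)).toLinearMap
  obtain ⟨k, Λ, hΛ⟩ := B.exists_range_comp_eq_range
  have hf : ∀ i x y, f i (x, y) = f i (x, 0) + B y i := fun i x y => by
    simpa [B] using map_add (f i) (x, 0) (0, y)
  let g : Fin n → E × (Fin k → ℝ) →L[ℝ] ℝ := fun i =>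
    (f i).comp (.inl ℝ E F) ∘L .fst ℝ E _ +
      LinearMap.toContinuousLinearMap (LinearMap.proj i ∘ₗ B ∘ₗ Λ) ∘L .snd ℝ E _
  have hg : ∀ i x s, g i (x, s) = f i (x, Λ s) := fun i x s => (hf i x (Λ s)).symm
  convert image_fst_pi (of_finite g α) using 1
  ext x
  constructor
  · rintro ⟨⟨x, y⟩, hy, rfl⟩
    obtain ⟨s, hs⟩ : B y ∈ LinearMap.range (B ∘ₗ Λ) := hΛ ▸ LinearMap.mem_range_self B y
    refine ⟨(x, s), fun i => ?_, rfl⟩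
    rw [hg, hf, ← LinearMap.comp_apply, hs, ← hf]
    exact hy i
  · rintro ⟨⟨x, s⟩, hs, rfl⟩
    exact ⟨(x, Λ s), fun i => hg i x s ▸ hs i, rfl⟩

end IsPolyhedralConvex

theorem optimal_value_polyhedral_general
    {X Y : Type*}
    [AddCommGroup X] [Module ℝ X] [TopologicalSpace X]
    [AddCommGroup Y] [Module ℝ Y] [TopologicalSpace Y]
    (φ : X × Y → EReal) (G : Set (X × Y))
    (hepi : IsPolyhedralConvex {p : (X × Y) × ℝ | φ p.1 ≤ (p.2 : EReal)})
    (hG : IsPolyhedralConvex G)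
    (μ : X → EReal) (hμ : ∀ x, μ x = sInf ((fun y => φ (x, y)) '' {y : Y | (x, y) ∈ G})) :
    IsPolyhedralConvex {q : X × ℝ | μ q.1 ≤ (q.2 : EReal)} := by
  -- `σ ((x, t), y) = ((x, y), t)`
  let σ : (X × ℝ) × Y →L[ℝ] (X × Y) × ℝ :=
    ((ContinuousLinearMap.fst ℝ X ℝ ∘L .fst ℝ _ Y).prod (.snd ℝ _ Y)).prod
      (.snd ℝ X ℝ ∘L .fst ℝ _ Y)
  have hP := ((hepi.inter (hG.preimage (.fst ℝ (X × Y) ℝ))).preimage σ).image_fst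
  have hproj : Prod.fst '' (σ ⁻¹' ({p | φ p.1 ≤ p.2} ∩ Prod.fst ⁻¹' G)) =
      {q : X × ℝ | ∃ e ∈ (fun y => φ (q.1, y)) '' {y | (q.1, y) ∈ G}, e ≤ q.2} := by
    ext ⟨x, t⟩
    simp [σ, and_comm]
  rw [ContinuousLinearMap.coe_fst', hproj] at hP
  convert hP using 1
  ext ⟨x, t⟩
  rw [mem_ofPred_eq, hμ]
  exact sInf_le_coe_iff_of_isClosed (S := fun x => (fun y => φ (x, y)) '' {y | (x, y) ∈ G})
    hP.isClosed x t

/-- If `φ : X × Y → ℝ̄` is a proper polyhedral convex function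
and `F` a polyhedral convex multifunction (with graph `G`), then the optimal
value function `μ(x) = inf {φ(x,y) : y ∈ F(x)}` is polyhedral convex, i.e. its
epigraph is a polyhedral convex subset of `X × ℝ`. -/
theorem optimal_value_polyhedral
    {X Y : Type*}
    [AddCommGroup X] [Module ℝ X] [TopologicalSpace X] [IsTopologicalAddGroup X]
    [ContinuousSMul ℝ X] [LocallyConvexSpace ℝ X] [T2Space X]
    [AddCommGroup Y] [Module ℝ Y] [TopologicalSpace Y] [IsTopologicalAddGroup Y]
    [ContinuousSMul ℝ Y] [LocallyConvexSpace ℝ Y] [T2Space Y]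
    (φ : X × Y → EReal) (G : Set (X × Y))
    (hepi : IsPolyhedralConvex {p : (X × Y) × ℝ | φ p.1 ≤ (p.2 : EReal)})
    (hproper : (∀ p, φ p ≠ ⊥) ∧ (∃ p, φ p ≠ ⊤))
    (hG : IsPolyhedralConvex G)
    (μ : X → EReal) (hμ : ∀ x, μ x = sInf ((fun y => φ (x, y)) '' {y : Y | (x, y) ∈ G})) :
    IsPolyhedralConvex {q : X × ℝ | μ q.1 ≤ (q.2 : EReal)} :=
  optimal_value_polyhedral_general φ G hepi hG μ hμ
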